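/- arXiv:1009.2171 — 3 statements merged into one kernel-verified Lean document; each statement's English description precedes it below -/
import Mathlib

section
/- Let G be a finite group, N a normal subgroup of G, and H a subgroup of G with G = NH and H isomorphic to G/N. Assume conditions (a:1) and (a:2): every subnormal subgroup of H is subnormal in G and every maximal subgroup of H is maximal in G, and every subnormal subgroup of N is subnormal in G and every maximal subgroup of N is maximal in G. Then 2 · |sn(G)| · |M(G)| · spd(G) ≥ |sn(N)| · |M(N)| · spd(N) + |sn(G/N)| · |M(G/N)| · spd(G/N). -/
open scoped Pointwise

/-- Two subgroups `X`, `Y` permute if `XY = YX` as sets. -/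
def Permutes {G : Type*} [Group G] (X Y : Subgroup G) : Prop :=
  (X : Set G) * (Y : Set G) = (Y : Set G) * (X : Set G)

/-- A subgroup `H` of `G` is subnormal if there is a finite chain
`H = H₀ ⊴ H₁ ⊴ … ⊴ Hₙ = G` with each term normal in the next. -/
def Subnormal {G : Type*} [Group G] (H : Subgroup G) : Prop :=
  ∃ n : ℕ, ∃ c : ℕ → Subgroup G, c 0 = H ∧ c n = ⊤ ∧
    ∀ i < n, c i ≤ c (i + 1) ∧ ((c i).subgroupOf (c (i + 1))).Normal

/-- The subgroup S-commutativity degree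
`spd(G) = |{(X,Y) ∈ sn(G) × M(G) : XY = YX}| / (|sn(G)|·|M(G)|)`;
maximal subgroups of `G` are exactly the coatoms of its subgroup lattice. -/
noncomputable def spd (G : Type*) [Group G] : ℝ :=
  (Nat.card {q : Subgroup G × Subgroup G //
      Subnormal q.1 ∧ IsCoatom q.2 ∧ Permutes q.1 q.2} : ℝ) /
    ((Nat.card {H : Subgroup G // Subnormal H} : ℝ) *
      (Nat.card {H : Subgroup G // IsCoatom H} : ℝ))

/-- The subgroup commutativity degree
`sd(G) = |{(X,Y) ∈ L(G)² : XY = YX}| / |L(G)|²`. -/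
noncomputable def sd (G : Type*) [Group G] : ℝ :=
  (Nat.card {q : Subgroup G × Subgroup G // Permutes q.1 q.2} : ℝ) /
    (Nat.card (Subgroup G) : ℝ) ^ 2

lemma permutes_map {G G' : Type*} [Group G] [Group G'] (f : G →* G') {X Y : Subgroup G}
    (h : Permutes X Y) : Permutes (X.map f) (Y.map f) := by
  unfold Permutes at *
  simp only [Subgroup.coe_map, ← Set.image_mul, h]

lemma subnormal_top {G : Type*} [Group G] : Subnormal (⊤ : Subgroup G) :=
  ⟨0, fun _ => ⊤, rfl, rfl, fun i hi => absurd hi (Nat.not_lt_zero i)⟩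

lemma subnormal_map_equiv {G G' : Type*} [Group G] [Group G'] (e : G ≃* G') {K : Subgroup G}
    (h : Subnormal K) : Subnormal (K.map (e : G →* G')) := by
  obtain ⟨n, c, h0, hn, hc⟩ := h
  refine ⟨n, fun i => (c i).map (e : G →* G'), congrArg _ h0, ?_, fun i hi => ?_⟩
  · dsimp only
    rw [hn]
    exact Subgroup.map_top_of_surjective _ e.surjective
  · obtain ⟨hle, hnorm⟩ := hc i hi
    refine ⟨Subgroup.map_mono hle, ?_⟩
    rw [Subgroup.normal_subgroupOf_iff (Subgroup.map_mono hle)]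
    rintro _ _ ⟨x, hx, rfl⟩ ⟨k, hk, rfl⟩
    exact ⟨k * x * k⁻¹, (Subgroup.normal_subgroupOf_iff hle).mp hnorm x k hx hk,
      by simp [map_mul]⟩

lemma spd_mul (G : Type*) [Group G] [Finite G] :
    (Nat.card {X : Subgroup G // Subnormal X} : ℝ) *
      (Nat.card {Y : Subgroup G // IsCoatom Y} : ℝ) * spd G =
    (Nat.card {q : Subgroup G × Subgroup G //
      Subnormal q.1 ∧ IsCoatom q.2 ∧ Permutes q.1 q.2} : ℝ) := by
  by_cases hb : Nat.card {Y : Subgroup G // IsCoatom Y} = 0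
  · have hempty : IsEmpty {Y : Subgroup G // IsCoatom Y} := by
      rcases Nat.card_eq_zero.mp hb with h | h
      · exact h
      · exact absurd h (not_infinite_iff_finite.mpr inferInstance)
    have hq : IsEmpty {q : Subgroup G × Subgroup G //
        Subnormal q.1 ∧ IsCoatom q.2 ∧ Permutes q.1 q.2} :=
      ⟨fun q => hempty.false ⟨q.1.2, q.2.2.1⟩⟩
    have hc0 : Nat.card {q : Subgroup G × Subgroup G //
        Subnormal q.1 ∧ IsCoatom q.2 ∧ Permutes q.1 q.2} = 0 := @Nat.card_of_isEmpty _ hq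
    rw [hb, hc0]
    simp
  · have ha : Nat.card {X : Subgroup G // Subnormal X} ≠ 0 := by
      have : Nonempty {X : Subgroup G // Subnormal X} := ⟨⊤, subnormal_top⟩
      exact Nat.card_ne_zero.mpr ⟨this, inferInstance⟩
    rw [spd]
    have ha' : (Nat.card {X : Subgroup G // Subnormal X} : ℝ) ≠ 0 := Nat.cast_ne_zero.mpr ha
    have hb' : (Nat.card {Y : Subgroup G // IsCoatom Y} : ℝ) ≠ 0 := Nat.cast_ne_zero.mpr hb
    field_simp

lemma cnt_le {G G' : Type*} [Group G] [Group G'] [Finite G']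
    (f : Subgroup G → Subgroup G') (hf : Function.Injective f)
    (hsn : ∀ K, Subnormal K → Subnormal (f K))
    (hm : ∀ K, IsCoatom K → IsCoatom (f K))
    (hp : ∀ X Y : Subgroup G, Permutes X Y → Permutes (f X) (f Y)) :
    Nat.card {q : Subgroup G × Subgroup G //
        Subnormal q.1 ∧ IsCoatom q.2 ∧ Permutes q.1 q.2}
      ≤ Nat.card {q : Subgroup G' × Subgroup G' //
        Subnormal q.1 ∧ IsCoatom q.2 ∧ Permutes q.1 q.2} := by
  apply Nat.card_le_card_of_injective
    (fun q => ⟨(f q.1.1, f q.1.2), hsn _ q.2.1, hm _ q.2.2.1, hp _ _ q.2.2.2⟩)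
  intro q r h
  apply Subtype.ext
  apply Prod.ext <;> apply hf
  · exact congrArg (fun x => (Subtype.val x).1) h
  · exact congrArg (fun x => (Subtype.val x).2) h

/-- If `G = NH` with `N ⊴ G`, `H ≅ G/N`, and conditions (a:1), (a:2)
hold, then `2|sn(G)||M(G)|spd(G) ≥ |sn(N)||M(N)|spd(N) + |sn(G/N)||M(G/N)|spd(G/N)`. -/
theorem spd_lower_bound_of_factorization (G : Type*) [Group G] [Finite G]
    (N H : Subgroup G) [N.Normal]
    (hprod : (N : Set G) * (H : Set G) = Set.univ)
    (hiso : Nonempty (↥H ≃* G ⧸ N))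
    (ha1sn : ∀ K : Subgroup ↥H, Subnormal K → Subnormal (K.map H.subtype))
    (ha1m : ∀ K : Subgroup ↥H, IsCoatom K → IsCoatom (K.map H.subtype))
    (ha2sn : ∀ K : Subgroup ↥N, Subnormal K → Subnormal (K.map N.subtype))
    (ha2m : ∀ K : Subgroup ↥N, IsCoatom K → IsCoatom (K.map N.subtype)) :
    2 * (Nat.card {X : Subgroup G // Subnormal X} : ℝ) *
        (Nat.card {Y : Subgroup G // IsCoatom Y} : ℝ) * spd G ≥
      (Nat.card {X : Subgroup ↥N // Subnormal X} : ℝ) *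
          (Nat.card {Y : Subgroup ↥N // IsCoatom Y} : ℝ) * spd ↥N +
        (Nat.card {X : Subgroup (G ⧸ N) // Subnormal X} : ℝ) *
          (Nat.card {Y : Subgroup (G ⧸ N) // IsCoatom Y} : ℝ) * spd (G ⧸ N) := by
  obtain ⟨e⟩ := hiso
  have hG := spd_mul G
  have hN := spd_mul ↥N
  have hQ := spd_mul (G ⧸ N)
  -- injection from pairs of N into pairs of G
  have h1 : Nat.card {q : Subgroup ↥N × Subgroup ↥N //
        Subnormal q.1 ∧ IsCoatom q.2 ∧ Permutes q.1 q.2}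
      ≤ Nat.card {q : Subgroup G × Subgroup G //
        Subnormal q.1 ∧ IsCoatom q.2 ∧ Permutes q.1 q.2} :=
    cnt_le (fun K => K.map N.subtype)
      (Subgroup.map_injective N.subtype_injective)
      ha2sn ha2m (fun _ _ h => permutes_map N.subtype h)
  -- injection from pairs of G/N into pairs of G via e.symm then subtype
  have h2 : Nat.card {q : Subgroup (G ⧸ N) × Subgroup (G ⧸ N) //
        Subnormal q.1 ∧ IsCoatom q.2 ∧ Permutes q.1 q.2}
      ≤ Nat.card {q : Subgroup G × Subgroup G //
        Subnormal q.1 ∧ IsCoatom q.2 ∧ Permutes q.1 q.2} :=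
    cnt_le (fun K => (K.map (e.symm : G ⧸ N →* ↥H)).map H.subtype)
      ((Subgroup.map_injective H.subtype_injective).comp
        (Subgroup.map_injective e.symm.injective))
      (fun K hK => ha1sn _ (subnormal_map_equiv e.symm hK))
      (fun K hK => ha1m _ ((OrderIso.isCoatom_iff (MulEquiv.mapSubgroup e.symm) K).mpr hK))
      (fun X Y h => permutes_map H.subtype (permutes_map (e.symm : G ⧸ N →* ↥H) h))
  rw [ge_iff_le, show 2 * (Nat.card {X : Subgroup G // Subnormal X} : ℝ) *
        (Nat.card {Y : Subgroup G // IsCoatom Y} : ℝ) * spd G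
      = 2 * ((Nat.card {X : Subgroup G // Subnormal X} : ℝ) *
        (Nat.card {Y : Subgroup G // IsCoatom Y} : ℝ) * spd G) by ring,
    hG, hN, hQ, two_mul]
  exact add_le_add (Nat.cast_le.mpr h1) (Nat.cast_le.mpr h2)
end

section
/- Let G be a finite group and let N ≅ Z_{p^{α₁}} × Z_{p^{α₂}} be a non-trivial normal abelian subgroup of G with 1 ≤ α₁ ≤ α₂ and p prime, such that G/N has prime order. Then sd(G) ≥ g(p, α₁, α₂) / (2 · |L(G)|²), where g(p, α₁, α₂) = (1/(p − 1)⁴) · [ (α₂ − α₁ + 1)p^{α₁+2} − (α₂ − α₁ − 1)p^{α₁+1} − (α₁ + α₂ + 3)p + (α₁ + α₂ + 1) ]² + 4. -/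
open scoped Pointwise

/-!
Subgroups of the abelian group `N` pairwise permute, so `sd G ≥ |L(N)|² / |L(G)|²`, and since
`N ≠ 1` has at least two subgroups, `|L(N)|² ≥ (|L(N)|² + 4) / 2`. It remains to bound `|L(N)|`
from below. In `ℤ/p^a × ℤ/p^b`, the subgroup generated by `(p^(a-e), p^(d-e) t)` and `(0, p^d)`,
for `e ≤ a`, `d ≤ b`, `t < p^(min d e)`, projects onto a subgroup of order `p^e` of the first
factor and meets the second factor in `⟨p^d⟩`; this recovers `e` and `d`, and then `t` from the
second coordinate modulo `p^d`. There are `∑_{e ≤ a, d ≤ b} p^(min d e)` such triples, and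
`(p - 1)²` times this sum is the bracket in the bound.
-/

open AddSubgroup

open Finset in
theorem mul_sum_range_pow_min {R : Type*} [CommRing R] (x : R) {e b : ℕ} (heb : e ≤ b) :
    (x - 1) * ∑ d ∈ range (b + 1), x ^ min d e =
      x ^ e - 1 + ((b : R) - e + 1) * x ^ e * (x - 1) := by
  induction b, heb using Nat.le_induction with
  | base =>
    rw [sum_range_succ, min_self, sum_congr rfl fun d hd => by rw [min_eq_left (mem_range.1 hd).le],
      mul_add, mul_comm, geom_sum_mul]
    ring
  | succ b heb ih =>
    rw [sum_range_succ, mul_add, ih, min_eq_right (by omega)]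
    push_cast
    ring

open Finset in
theorem sq_mul_sum_sum_pow_min {R : Type*} [CommRing R] (x : R) {a b : ℕ} (hab : a ≤ b) :
    (x - 1) ^ 2 * ∑ e ∈ range (a + 1), ∑ d ∈ range (b + 1), x ^ min d e =
      ((b : R) - a + 1) * x ^ (a + 2) - ((b : R) - a - 1) * x ^ (a + 1)
        - ((a : R) + b + 3) * x + ((a : R) + b + 1) := by
  induction a with
  | zero =>
    rw [sum_range_one, sq, mul_assoc, mul_sum_range_pow_min x (Nat.zero_le b)]
    push_cast
    ring
  | succ a ih =>
    rw [sum_range_succ, mul_add, ih (by omega), sq, mul_assoc, mul_sum_range_pow_min x hab]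
    push_cast
    ring

section ClosurePair
variable {A B : Type*} [AddCommGroup A] [AddCommGroup B]

theorem map_fst_closure_pair (u : A) (v w : B) :
    (closure {(u, v), (0, w)} : AddSubgroup (A × B)).map (AddMonoidHom.fst A B) =
      zmultiples u := by
  ext x
  simp only [mem_map, mem_closure_pair, mem_zmultiples_iff]
  constructor
  · rintro ⟨_, ⟨m, n, rfl⟩, rfl⟩
    exact ⟨m, by simp⟩
  · rintro ⟨m, rfl⟩
    exact ⟨_, ⟨m, 0, rfl⟩, by simp⟩

theorem comap_inr_closure_pair {u : A} {v w : B} (h : addOrderOf u • v ∈ zmultiples w) :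
    (closure {(u, v), (0, w)} : AddSubgroup (A × B)).comap (AddMonoidHom.inr A B) =
      zmultiples w := by
  refine le_antisymm (fun y hy => ?_) (zmultiples_le.2 (subset_closure (by simp)))
  obtain ⟨m, n, hmn⟩ := mem_closure_pair.1 hy
  obtain ⟨k, rfl⟩ : (addOrderOf u : ℤ) ∣ m :=
    addOrderOf_dvd_iff_zsmul_eq_zero.2 (by simpa using congrArg Prod.fst hmn)
  have hy : y = k • (addOrderOf u • v) + n • w := by
    simpa [mul_comm, mul_zsmul, natCast_zsmul] using (congrArg Prod.snd hmn).symm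
  rw [hy]
  exact add_mem (zsmul_mem h k) (zsmul_mem (mem_zmultiples w) n)

theorem sub_mem_zmultiples_of_closure_pair_eq {u : A} {v v' w : B}
    (h : addOrderOf u • v' ∈ zmultiples w)
    (heq : (closure {(u, v), (0, w)} : AddSubgroup (A × B)) = closure {(u, v'), (0, w)}) :
    v - v' ∈ zmultiples w := by
  rw [← comap_inr_closure_pair h, ← heq, mem_comap, AddMonoidHom.inr_apply,
    show ((0 : A), v - v') = (u, v) - (u, v') by simp]
  exact sub_mem (subset_closure (by simp)) (heq ▸ subset_closure (by simp))

end ClosurePair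

namespace ZMod

theorem addOrderOf_natCast_pow {p : ℕ} (hp : p ≠ 0) {k n : ℕ} (hk : k ≤ n) :
    addOrderOf ((p ^ k : ℕ) : ZMod (p ^ n)) = p ^ (n - k) := by
  rw [addOrderOf_coe _ (pow_ne_zero n hp), Nat.gcd_eq_right (pow_dvd_pow p hk),
    Nat.pow_div hk (Nat.pos_of_ne_zero hp)]

theorem eq_of_zmultiples_natCast_pow_eq {p : ℕ} (hp : 2 ≤ p) {k k' n : ℕ} (hk : k ≤ n)
    (hk' : k' ≤ n)
    (h : zmultiples ((p ^ k : ℕ) : ZMod (p ^ n)) = zmultiples ((p ^ k' : ℕ) : ZMod (p ^ n))) :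
    k = k' := by
  have hcard := congrArg (fun H : AddSubgroup _ => Nat.card H) h
  rw [Nat.card_zmultiples, Nat.card_zmultiples, addOrderOf_natCast_pow (by omega) hk,
    addOrderOf_natCast_pow (by omega) hk'] at hcard
  have := Nat.pow_right_injective hp hcard
  omega

theorem natCast_modEq_of_sub_mem_zmultiples {m n x y : ℕ} (hmn : m ∣ n)
    (h : (x : ZMod n) - y ∈ zmultiples (m : ZMod n)) : x ≡ y [MOD m] := by
  obtain ⟨k, hk⟩ := h
  rw [← natCast_eq_natCast_iff, ← sub_eq_zero]
  have hcast := congrArg (castHom hmn (ZMod m)) hk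
  rw [map_zsmul, map_natCast, natCast_self, smul_zero, map_sub, map_natCast, map_natCast] at hcast
  exact hcast.symm

theorem addOrderOf_natCast_pow_sub_nsmul_mem_zmultiples {p a b : ℕ} (hp : p ≠ 0) {e : ℕ}
    (he : e ≤ a) (d t : ℕ) :
    addOrderOf ((p ^ (a - e) : ℕ) : ZMod (p ^ a)) • ((p ^ (d - e) * t : ℕ) : ZMod (p ^ b)) ∈
      zmultiples ((p ^ d : ℕ) : ZMod (p ^ b)) := by
  have hexp : p ^ e * (p ^ (d - e) * t) = (p ^ (e - d) * t) * p ^ d := by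
    rw [← mul_assoc, ← pow_add, mul_right_comm, ← pow_add]
    congr 2
    omega
  rw [addOrderOf_natCast_pow hp (Nat.sub_le a e), Nat.sub_sub_self he, nsmul_eq_mul,
    ← Nat.cast_mul, hexp, Nat.cast_mul, ← nsmul_eq_mul]
  exact nsmul_mem (mem_zmultiples _) _

end ZMod

theorem pow_sub_mul_lt_pow {p : ℕ} (hp : p ≠ 0) {d e t : ℕ} (ht : t < p ^ min d e) :
    p ^ (d - e) * t < p ^ d := by
  calc p ^ (d - e) * t < p ^ (d - e) * p ^ min d e :=
        Nat.mul_lt_mul_of_pos_left ht (by positivity)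
    _ = p ^ d := by rw [← pow_add]; congr 1; omega

abbrev ZModProdIndex (p a b : ℕ) : Type :=
  Σ ed : Fin (a + 1) × Fin (b + 1), Fin (p ^ min (ed.2 : ℕ) ed.1)

namespace ZModProdIndex

variable {p a b : ℕ}

def toAddSubgroup : ZModProdIndex p a b → AddSubgroup (ZMod (p ^ a) × ZMod (p ^ b))
  | ⟨(e, d), t⟩ => closure {(((p ^ (a - e) : ℕ) : ZMod (p ^ a)),
      ((p ^ ((d : ℕ) - e) * t : ℕ) : ZMod (p ^ b))), (0, ((p ^ (d : ℕ) : ℕ) : ZMod (p ^ b)))}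

theorem toAddSubgroup_injective (hp : 2 ≤ p) :
    Function.Injective (toAddSubgroup : ZModProdIndex p a b → _) := by
  rintro ⟨⟨e, d⟩, t⟩ ⟨⟨e', d'⟩, t'⟩ h
  have hp0 : p ≠ 0 := by omega
  simp only [toAddSubgroup] at h
  have he : e = e' := by
    have hfst := congrArg (map (AddMonoidHom.fst _ _)) h
    rw [map_fst_closure_pair, map_fst_closure_pair] at hfst
    have := ZMod.eq_of_zmultiples_natCast_pow_eq hp (Nat.sub_le a e) (Nat.sub_le a e') hfst
    omega
  subst he
  have hord (d t : ℕ) :=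
    ZMod.addOrderOf_natCast_pow_sub_nsmul_mem_zmultiples (b := b) hp0 e.is_le d t
  have hd : d = d' := by
    have hinr := congrArg (comap (AddMonoidHom.inr _ _)) h
    rw [comap_inr_closure_pair (hord d t), comap_inr_closure_pair (hord d' t')] at hinr
    exact Fin.ext (ZMod.eq_of_zmultiples_natCast_pow_eq hp d.is_le d'.is_le hinr)
  subst hd
  have hmod := ZMod.natCast_modEq_of_sub_mem_zmultiples (pow_dvd_pow p d.is_le)
    (sub_mem_zmultiples_of_closure_pair_eq (hord d t') h)
  have ht := hmod.eq_of_lt_of_lt (pow_sub_mul_lt_pow hp0 t.isLt) (pow_sub_mul_lt_pow hp0 t'.isLt)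
  rw [Fin.ext (Nat.eq_of_mul_eq_mul_left (by positivity) ht)]

theorem card_eq (p a b : ℕ) :
    Nat.card (ZModProdIndex p a b) =
      ∑ e ∈ Finset.range (a + 1), ∑ d ∈ Finset.range (b + 1), p ^ min d e := by
  simp only [Nat.card_eq_fintype_card, Fintype.card_sigma, Fintype.card_fin,
    Fintype.sum_prod_type]
  rw [← Fin.sum_univ_eq_sum_range]
  exact Fintype.sum_congr _ _ fun e => Fin.sum_univ_eq_sum_range (fun d => p ^ min d (e : ℕ)) _

end ZModProdIndex

theorem sum_sum_pow_min_le_card_addSubgroup {p : ℕ} (hp : 2 ≤ p) (a b : ℕ) :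
    ∑ e ∈ Finset.range (a + 1), ∑ d ∈ Finset.range (b + 1), p ^ min d e ≤
      Nat.card (AddSubgroup (ZMod (p ^ a) × ZMod (p ^ b))) := by
  have : NeZero p := ⟨by omega⟩
  rw [← ZModProdIndex.card_eq]
  exact Nat.card_le_card_of_injective _ (ZModProdIndex.toAddSubgroup_injective hp)

theorem permutes_of_commute {G : Type*} [Group G] {X Y : Subgroup G}
    (h : ∀ x ∈ X, ∀ y ∈ Y, Commute x y) : Permutes X Y := by
  ext z
  simp only [Set.mem_mul]
  constructor
  · rintro ⟨x, hx, y, hy, rfl⟩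
    exact ⟨y, hy, x, hx, (h x hx y hy).symm.eq⟩
  · rintro ⟨y, hy, x, hx, rfl⟩
    exact ⟨x, hx, y, hy, (h x hx y hy).eq⟩

theorem sq_card_subgroup_div_sq_le_sd {G : Type*} [Group G] [Finite G] (N : Subgroup G)
    [IsMulCommutative N] : (Nat.card (Subgroup N) : ℝ) ^ 2 / Nat.card (Subgroup G) ^ 2 ≤ sd G := by
  have hcomm : ∀ x ∈ N, ∀ y ∈ N, Commute x y := fun x hx y hy =>
    Subtype.ext_iff.1 (mul_comm' (⟨x, hx⟩ : N) ⟨y, hy⟩)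
  let f : Subgroup N × Subgroup N → {q : Subgroup G × Subgroup G // Permutes q.1 q.2} :=
    fun H => ⟨(H.1.map N.subtype, H.2.map N.subtype), permutes_of_commute fun x hx y hy =>
      hcomm x (Subgroup.map_subtype_le H.1 hx) y (Subgroup.map_subtype_le H.2 hy)⟩
  have hf : Function.Injective f := fun H K h => by
    have hmap := Subgroup.map_injective N.subtype_injective
    exact Prod.ext (hmap (congrArg (·.1.1) h)) (hmap (congrArg (·.1.2) h))
  have hcard := Nat.card_le_card_of_injective f hf
  rw [Nat.card_prod, ← sq] at hcard
  rw [sd]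
  gcongr
  exact_mod_cast hcard

theorem card_subgroup_eq_card_addSubgroup_prod {H A B : Type*} [Group H] [AddGroup A] [AddGroup B]
    (e : H ≃* Multiplicative A × Multiplicative B) :
    Nat.card (Subgroup H) = Nat.card (AddSubgroup (A × B)) :=
  Nat.card_congr (e.mapSubgroup.trans ((MulEquiv.prodMultiplicative A B).symm.mapSubgroup.trans
    AddSubgroup.toSubgroup.symm)).toEquiv

theorem sd_lower_bound_abelian_normal_general (G : Type*) [Group G] [Finite G]
    (p α₁ α₂ : ℕ) (hp : p.Prime) (hα₁₂ : α₁ ≤ α₂)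
    (N : Subgroup G) (hN : N ≠ ⊥)
    (hNiso : Nonempty (↥N ≃*
      Multiplicative (ZMod (p ^ α₁)) × Multiplicative (ZMod (p ^ α₂)))) :
    sd G ≥
      ((1 / ((p : ℝ) - 1) ^ 4) *
          (((α₂ : ℝ) - α₁ + 1) * (p : ℝ) ^ (α₁ + 2) -
            ((α₂ : ℝ) - α₁ - 1) * (p : ℝ) ^ (α₁ + 1) -
            ((α₁ : ℝ) + α₂ + 3) * p + ((α₁ : ℝ) + α₂ + 1)) ^ 2 + 4) /
        (2 * (Nat.card (Subgroup G) : ℝ) ^ 2) := by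
  obtain ⟨e⟩ := hNiso
  have : IsMulCommutative N := ⟨⟨fun x y => e.injective (by rw [map_mul, map_mul, mul_comm])⟩⟩
  have : Nontrivial N := (Subgroup.nontrivial_iff_ne_bot N).2 hN
  have hS : ∑ e ∈ Finset.range (α₁ + 1), ∑ d ∈ Finset.range (α₂ + 1), (p : ℝ) ^ min d e ≤
      Nat.card (Subgroup N) := by
    rw [card_subgroup_eq_card_addSubgroup_prod e]
    exact_mod_cast sum_sum_pow_min_le_card_addSubgroup hp.two_le α₁ α₂
  have hN2 : (2 : ℝ) ≤ Nat.card (Subgroup N) := by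
    exact_mod_cast Finite.one_lt_card (α := Subgroup N)
  have hp1 : (p : ℝ) - 1 ≠ 0 := sub_ne_zero.2 (by exact_mod_cast hp.one_lt.ne')
  rw [ge_iff_le, ← sq_mul_sum_sum_pow_min _ hα₁₂]
  set S := ∑ e ∈ Finset.range (α₁ + 1), ∑ d ∈ Finset.range (α₂ + 1), (p : ℝ) ^ min d e
  calc
    _ = (S ^ 2 + 4) / (2 * Nat.card (Subgroup G) ^ 2) := by field_simp
    _ ≤ 2 * (Nat.card (Subgroup N) : ℝ) ^ 2 / (2 * Nat.card (Subgroup G) ^ 2) := by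
      gcongr
      nlinarith [show 0 ≤ S by positivity]
    _ = (Nat.card (Subgroup N) : ℝ) ^ 2 / Nat.card (Subgroup G) ^ 2 :=
      mul_div_mul_left _ _ two_ne_zero
    _ ≤ sd G := sq_card_subgroup_div_sq_le_sd N

/-- Lemma 2: lower bound for `sd(G)` when `G` has a non-trivial
normal abelian subgroup `N ≅ Z_{p^α₁} × Z_{p^α₂}` of prime index. -/
theorem sd_lower_bound_abelian_normal (G : Type*) [Group G] [Finite G]
    (p α₁ α₂ : ℕ) (hp : p.Prime) (hα₁ : 1 ≤ α₁) (hα₁₂ : α₁ ≤ α₂)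
    (N : Subgroup G) [N.Normal] (hN : N ≠ ⊥)
    (hNiso : Nonempty (↥N ≃*
      Multiplicative (ZMod (p ^ α₁)) × Multiplicative (ZMod (p ^ α₂))))
    (hquot : (Nat.card (G ⧸ N)).Prime) :
    sd G ≥
      ((1 / ((p : ℝ) - 1) ^ 4) *
          (((α₂ : ℝ) - α₁ + 1) * (p : ℝ) ^ (α₁ + 2) -
            ((α₂ : ℝ) - α₁ - 1) * (p : ℝ) ^ (α₁ + 1) -
            ((α₁ : ℝ) + α₂ + 3) * p + ((α₁ : ℝ) + α₂ + 1)) ^ 2 + 4) /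
        (2 * (Nat.card (Subgroup G) : ℝ) ^ 2) :=
  sd_lower_bound_abelian_normal_general G p α₁ α₂ hp hα₁₂ N hN hNiso
end

section
/- Let G be a finite group, N a normal subgroup of G, and H a subgroup of G with G = NH. Then sd(G) ≥ (1 / |L(G)|²) · √( Σ_{(X,Y) ∈ L(N)×L(N)} Σ_{(Z,T) ∈ L(H)×L(H)} χ(X,Y) · χ(Z,T) ), where χ(X,Y) = 1 if XY = YX and χ(X,Y) = 0 otherwise. -/
open scoped Pointwise

lemma permutes_map_iff {G : Type*} [Group G] (K : Subgroup G) (X Y : Subgroup K) :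
    Permutes (X.map K.subtype) (Y.map K.subtype) ↔ Permutes X Y := by
  unfold Permutes
  simp only [Subgroup.coe_map, ← Set.image_mul]
  exact (Set.image_injective.2 K.subtype_injective).eq_iff

lemma card_perm_le {G : Type*} [Group G] [Finite G] (K : Subgroup G) :
    Nat.card {q : Subgroup K × Subgroup K // Permutes q.1 q.2} ≤
      Nat.card {q : Subgroup G × Subgroup G // Permutes q.1 q.2} := by
  apply Nat.card_le_card_of_injective
    (fun q => ⟨(q.1.1.map K.subtype, q.1.2.map K.subtype),
      (permutes_map_iff K _ _).2 q.2⟩)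
  intro a b hab
  have h := Subtype.ext_iff.1 hab
  have inj := Subgroup.map_injective (f := K.subtype) K.subtype_injective
  exact Subtype.ext (Prod.ext (inj (congrArg Prod.fst h)) (inj (congrArg Prod.snd h)))


/-- Corollary: if `G = NH` with `N ⊴ G`, then
`sd(G) ≥ (1/|L(G)|²)·√(Σ χ(X,Y)χ(Z,T))`, the sum running over
`(X,Y) ∈ L(N)²` and `(Z,T) ∈ L(H)²`; since `χ` is a `0/1`-indicator of
permutability, the double sum is the number of quadruples with both pairs permuting. -/
theorem sd_sqrt_lower_bound (G : Type*) [Group G] [Finite G]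
    (N H : Subgroup G) [N.Normal]
    (hprod : (N : Set G) * (H : Set G) = Set.univ) :
    sd G ≥
      (1 / (Nat.card (Subgroup G) : ℝ) ^ 2) *
        Real.sqrt
          (Nat.card {q : (Subgroup ↥N × Subgroup ↥N) × (Subgroup ↥H × Subgroup ↥H) //
            Permutes q.1.1 q.1.2 ∧ Permutes q.2.1 q.2.2}) := by
  have hcard : Nat.card {q : (Subgroup ↥N × Subgroup ↥N) × (Subgroup ↥H × Subgroup ↥H) //
        Permutes q.1.1 q.1.2 ∧ Permutes q.2.1 q.2.2} =
      Nat.card {q : Subgroup ↥N × Subgroup ↥N // Permutes q.1 q.2} *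
        Nat.card {q : Subgroup ↥H × Subgroup ↥H // Permutes q.1 q.2} := by
    rw [Nat.card_congr (Equiv.subtypeProdEquivProd
      (p := fun p : Subgroup ↥N × Subgroup ↥N => Permutes p.1 p.2)
      (q := fun p : Subgroup ↥H × Subgroup ↥H => Permutes p.1 p.2)), Nat.card_prod]
  set P : ℕ := Nat.card {q : Subgroup G × Subgroup G // Permutes q.1 q.2} with hP
  have hN := card_perm_le N
  have hH := card_perm_le H
  have hsqrt : Real.sqrt
      (Nat.card {q : (Subgroup ↥N × Subgroup ↥N) × (Subgroup ↥H × Subgroup ↥H) //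
        Permutes q.1.1 q.1.2 ∧ Permutes q.2.1 q.2.2}) ≤ P := by
    rw [hcard]
    calc Real.sqrt _ ≤ Real.sqrt ((P : ℝ) * P) := by
          apply Real.sqrt_le_sqrt
          push_cast
          exact mul_le_mul (by exact_mod_cast hN) (by exact_mod_cast hH)
            (Nat.cast_nonneg _) (Nat.cast_nonneg _)
      _ = P := by rw [Real.sqrt_mul_self (by positivity)]
  have hL : (0 : ℝ) < (Nat.card (Subgroup G) : ℝ) ^ 2 := by
    have : 0 < Nat.card (Subgroup G) := Nat.card_pos
    positivity
  rw [sd, ge_iff_le, one_div, mul_comm, div_eq_mul_inv]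
  exact mul_le_mul_of_nonneg_right hsqrt (inv_nonneg.2 hL.le)
end
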